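/- Let X be an extremally disconnected space satisfying S_1(sO, sO), and let V_1, V_2, … be nonempty finite families of semi-open subsets of X such that each point x ∈ X belongs to ⋃V_n for infinitely many n. Then there exist U_n ∈ V_n for each n such that the family {U_n : n ∈ ℕ} covers X. -/
import Mathlib


open Set

variable {X : Type*} [TopologicalSpace X]

/-- A set is semi-open if it is contained in the closure of its interior. -/
def SemiOpen (A : Set X) : Prop := A ⊆ closure (interior A)

/-- A family of sets is a semi-open cover if all members are semi-open and it covers the space. -/
def IsSemiOpenCover (U : Set (Set X)) : Prop := (∀ A ∈ U, SemiOpen A) ∧ ⋃₀ U = univ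

/-- The semi-Menger property `S_fin(sO, sO)`. -/
def SFinSO (X : Type*) [TopologicalSpace X] : Prop :=
  ∀ U : ℕ → Set (Set X), (∀ n, IsSemiOpenCover (U n)) →
    ∃ V : ℕ → Set (Set X), (∀ n, V n ⊆ U n ∧ (V n).Finite) ∧ ⋃₀ (⋃ n, V n) = univ

/-- The semi-Rothberger property `S_1(sO, sO)`. -/
def S1SO (X : Type*) [TopologicalSpace X] : Prop :=
  ∀ U : ℕ → Set (Set X), (∀ n, IsSemiOpenCover (U n)) →
    ∃ V : ℕ → Set X, (∀ n, V n ∈ U n) ∧ (⋃ n, V n) = univ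

/-- A strategy for Alice in `G_fin(sO,sO)` (a function from finite histories of Bob's moves
to semi-open covers) is winning if every play following it is lost by Bob. -/
def AliceWinningFin (σ : List (Set (Set X)) → Set (Set X)) : Prop :=
  (∀ h, IsSemiOpenCover (σ h)) ∧
  ∀ b : ℕ → Set (Set X),
    (∀ n, b n ⊆ σ (List.ofFn fun i : Fin n => b i) ∧ (b n).Finite) →
    ⋃₀ (⋃ n, b n) ≠ univ

/-- A strategy for Alice in `G_1(sO,sO)` is winning if every play following it is lost by Bob. -/
def AliceWinningOne (σ : List (Set X) → Set (Set X)) : Prop :=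
  (∀ h, IsSemiOpenCover (σ h)) ∧
  ∀ b : ℕ → Set X,
    (∀ n, b n ∈ σ (List.ofFn fun i : Fin n => b i)) →
    (⋃ n, b n) ≠ univ

/-- A family indexed by `ι` is a tail semi-open cover if the intersection of every cofinite
subfamily is semi-open and these intersections cover the space. -/
def TailSemiCover {ι : Type*} (U : ι → Set X) : Prop :=
  (∀ I : Set ι, Iᶜ.Finite → SemiOpen (⋂ i ∈ I, U i)) ∧
  ∀ x : X, ∃ I : Set ι, Iᶜ.Finite ∧ x ∈ ⋂ i ∈ I, U i

section Aux

variable {X : Type*} [TopologicalSpace X]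

lemma semiOpen_univ' : SemiOpen (univ : Set X) := by
  simp [SemiOpen]

lemma SemiOpen.inter' [ExtremallyDisconnected X] {A B : Set X}
    (hA : SemiOpen A) (hB : SemiOpen B) : SemiOpen (A ∩ B) := by
  have hopen : IsOpen (closure (interior A)) :=
    ExtremallyDisconnected.open_closure _ isOpen_interior
  intro x hx
  have h1 : x ∈ closure (interior A) ∩ closure (interior B) :=
    ⟨hA hx.1, hB hx.2⟩
  have h2 : closure (interior A) ∩ closure (interior B) ⊆
      closure (closure (interior A) ∩ interior B) := hopen.inter_closure
  have h3 : closure (interior A) ∩ interior B ⊆ closure (interior B ∩ interior A) := by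
    intro y hy
    exact isOpen_interior.inter_closure ⟨hy.2, hy.1⟩
  have h4 : closure (closure (interior A) ∩ interior B) ⊆
      closure (interior B ∩ interior A) := by
    rw [← closure_closure (s := interior B ∩ interior A)]
    exact closure_mono h3
  have h5 : interior B ∩ interior A ⊆ interior (A ∩ B) := by
    rw [interior_inter]; exact fun y hy => ⟨hy.2, hy.1⟩
  exact closure_mono h5 (h4 (h2 h1))

lemma semiOpen_biInter_finset [ExtremallyDisconnected X] (F : Finset ℕ) (f : ℕ → Set X)
    (hf : ∀ j ∈ F, SemiOpen (f j)) : SemiOpen (⋂ j ∈ F, f j) := by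
  classical
  induction F using Finset.induction_on with
  | empty => simpa using semiOpen_univ'
  | @insert a s hnotmem ih =>
    rw [Finset.set_biInter_insert]
    exact (hf a (Finset.mem_insert_self a s)).inter'
      (ih fun j hj => hf j (Finset.mem_insert_of_mem hj))

/-- Greedy injective selector from a sequence of finsets. -/
noncomputable def greedySel (F : ℕ → Finset ℕ) : ℕ → ℕ
  | n =>
    let used := (Finset.range n).attach.image fun i => greedySel F i.1
    if h : (F n \ used).Nonempty then (F n \ used).min' h else 0
  termination_by n => n
  decreasing_by exact Finset.mem_range.mp i.2

lemma greedySel_spec (F : ℕ → Finset ℕ) (hcard : ∀ n, n < (F n).card) (n : ℕ) :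
    greedySel F n ∈ F n \ ((Finset.range n).attach.image fun i => greedySel F i.1) := by
  classical
  rw [greedySel]
  set used := (Finset.range n).attach.image fun i => greedySel F i.1 with hused
  have hne : (F n \ used).Nonempty := by
    by_contra hcon
    rw [Finset.not_nonempty_iff_eq_empty, Finset.sdiff_eq_empty_iff_subset] at hcon
    have h1 : (F n).card ≤ used.card := Finset.card_le_card hcon
    have h2 : used.card ≤ n := by
      calc used.card ≤ (Finset.range n).attach.card := Finset.card_image_le
        _ = n := by simp
    have := hcard n
    omega
  simp only [hne, dif_pos]
  exact Finset.min'_mem _ hne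

lemma greedySel_mem (F : ℕ → Finset ℕ) (hcard : ∀ n, n < (F n).card) (n : ℕ) :
    greedySel F n ∈ F n :=
  (Finset.mem_sdiff.mp (greedySel_spec F hcard n)).1

lemma greedySel_inj (F : ℕ → Finset ℕ) (hcard : ∀ n, n < (F n).card) :
    Function.Injective (greedySel F) := by
  classical
  intro a b hab
  by_contra hne
  wlog hlt : a < b generalizing a b
  · exact this hab.symm (Ne.symm hne) (by omega)
  have h1 := (Finset.mem_sdiff.mp (greedySel_spec F hcard b)).2
  apply h1
  refine Finset.mem_image.mpr ⟨⟨a, Finset.mem_range.mpr hlt⟩, Finset.mem_attach _ _, ?_⟩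
  exact hab.symm ▸ rfl

end Aux

theorem stmt13 [ExtremallyDisconnected X] (h : S1SO X)
    (V : ℕ → Set (Set X))
    (hfin : ∀ n, (V n).Finite) (hne : ∀ n, (V n).Nonempty)
    (hso : ∀ n, ∀ A ∈ V n, SemiOpen A)
    (hinf : ∀ x : X, {n : ℕ | x ∈ ⋃₀ V n}.Infinite) :
    ∃ U : ℕ → Set X, (∀ n, U n ∈ V n) ∧ (⋃ n, U n) = univ := by
  classical
  -- the auxiliary covers
  set W : ℕ → Set (Set X) := fun n =>
    {S | ∃ (F : Finset ℕ) (f : ℕ → Set X), F.card = n + 1 ∧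
      (∀ j ∈ F, f j ∈ V j) ∧ S = ⋂ j ∈ F, f j} with hW
  have hWcover : ∀ n, IsSemiOpenCover (W n) := by
    intro n
    constructor
    · rintro A ⟨F, f, hcard, hfV, rfl⟩
      exact semiOpen_biInter_finset F f fun j hj => hso j _ (hfV j hj)
    · apply eq_univ_of_forall
      intro x
      obtain ⟨F, hFsub, hFcard⟩ := (hinf x).exists_subset_card_eq (n + 1)
      set f : ℕ → Set X := fun j =>
        if hj : ∃ A ∈ V j, x ∈ A then hj.choose else (hne j).some with hf
      have hfV : ∀ j ∈ F, f j ∈ V j ∧ x ∈ f j := by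
        intro j hj
        have hx : x ∈ ⋃₀ V j := hFsub hj
        obtain ⟨A, hA, hxA⟩ := hx
        have hex : ∃ A ∈ V j, x ∈ A := ⟨A, hA, hxA⟩
        simp only [hf, dif_pos hex]
        exact ⟨hex.choose_spec.1, hex.choose_spec.2⟩
      refine ⟨⋂ j ∈ F, f j, ⟨F, f, hFcard, fun j hj => (hfV j hj).1, rfl⟩, ?_⟩
      exact mem_biInter fun j hj => (hfV j hj).2
  obtain ⟨s, hs, hscov⟩ := h W hWcover
  choose F f hcard hfV hseq using hs
  have hcard' : ∀ n, n < (F n).card := fun n => by rw [hcard n]; omega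
  set U : ℕ → Set X := fun k =>
    if hk : ∃ n, greedySel F n = k then f hk.choose k else (hne k).some with hU
  refine ⟨U, ?_, ?_⟩
  · intro k
    by_cases hk : ∃ n, greedySel F n = k
    · simp only [hU, dif_pos hk]
      have hmem := greedySel_mem F hcard' hk.choose
      rw [hk.choose_spec] at hmem
      exact hfV hk.choose k hmem
    · simp only [hU, dif_neg hk]
      exact (hne k).some_mem
  · apply eq_univ_of_forall
    intro x
    have hx : x ∈ ⋃ n, s n := hscov ▸ mem_univ x
    obtain ⟨n, hn⟩ := mem_iUnion.mp hx
    set k := greedySel F n with hk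
    have hkex : ∃ m, greedySel F m = k := ⟨n, rfl⟩
    have hchoose : hkex.choose = n :=
      greedySel_inj F hcard' hkex.choose_spec
    have hUk : U k = f n k := by
      simp only [hU, dif_pos hkex, hchoose]
    refine mem_iUnion.mpr ⟨k, ?_⟩
    rw [hUk]
    have hmem : k ∈ F n := greedySel_mem F hcard' n
    rw [hseq n] at hn
    exact mem_iInter₂.mp hn k hmem
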